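/- The five polynomials t₄ = u₂, t₆ = u₅, t₈ = u₁u₃, t₁₀ = u₁u₆ + u₃u₄, t₁₂ = u₄u₆ are algebraically independent over ℂ in the polynomial ring R = ℂ[u₁,…,u₆]. -/
import Mathlib


open MvPolynomial

noncomputable def t4 : MvPolynomial (Fin 6) ℂ := X 1
noncomputable def t6 : MvPolynomial (Fin 6) ℂ := X 4
noncomputable def t8 : MvPolynomial (Fin 6) ℂ := X 0 * X 2
noncomputable def t10 : MvPolynomial (Fin 6) ℂ := X 0 * X 5 + X 2 * X 3
noncomputable def t12 : MvPolynomial (Fin 6) ℂ := X 3 * X 5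

/-- The quadratic polynomial `X₃·Y - X₂·Y²` over `ℂ[X₀,…,X₃]`. -/
noncomputable def QQ : Polynomial (MvPolynomial (Fin 4) ℂ) :=
  Polynomial.X * Polynomial.C (X 3) - Polynomial.C (X 2) * Polynomial.X ^ 2

lemma QQ_trans : Transcendental (MvPolynomial (Fin 4) ℂ) QQ := by
  apply Polynomial.transcendental
  · have : QQ.natDegree = 2 := by unfold QQ; compute_degree!
    omega
  · apply mem_nonZeroDivisors_of_ne_zero
    have h2 : QQ.natDegree = 2 := by unfold QQ; compute_degree!
    rw [Polynomial.leadingCoeff, h2]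
    intro h
    simp [QQ, Polynomial.coeff_sub] at h

noncomputable def Wf : Fin 5 → MvPolynomial (Fin 5) ℂ :=
  ![X 0 * X 4 - X 3 * X 0 ^ 2, X 1, X 2, X 3, X 4]

lemma E_X1 : finSuccEquiv ℂ 4 (X 1) = Polynomial.C (X 0) := by
  have h : (1 : Fin 5) = Fin.succ 0 := rfl
  rw [h, finSuccEquiv_X_succ]

lemma E_X2 : finSuccEquiv ℂ 4 (X 2) = Polynomial.C (X 1) := by
  have h : (2 : Fin 5) = Fin.succ 1 := rfl
  rw [h, finSuccEquiv_X_succ]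

lemma E_X3 : finSuccEquiv ℂ 4 (X 3) = Polynomial.C (X 2) := by
  have h : (3 : Fin 5) = Fin.succ 2 := rfl
  rw [h, finSuccEquiv_X_succ]

lemma E_X4 : finSuccEquiv ℂ 4 (X 4) = Polynomial.C (X 3) := by
  have h : (4 : Fin 5) = Fin.succ 3 := rfl
  rw [h, finSuccEquiv_X_succ]

lemma hcomp :
    (finSuccEquiv ℂ 4).toAlgHom.comp (aeval Wf) =
      ((Polynomial.aeval QQ).restrictScalars ℂ).comp (finSuccEquiv ℂ 4).toAlgHom := by
  apply MvPolynomial.algHom_ext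
  intro i
  fin_cases i <;>
    · show (finSuccEquiv ℂ 4) ((aeval Wf) _) = (Polynomial.aeval QQ) ((finSuccEquiv ℂ 4) _)
      simp [Wf, QQ, E_X1, E_X2, E_X3, E_X4, finSuccEquiv_X_zero]
      try ring

lemma W_indep : AlgebraicIndependent ℂ Wf := by
  rw [algebraicIndependent_iff_injective_aeval]
  have hQ : Function.Injective (Polynomial.aeval QQ :
      Polynomial (MvPolynomial (Fin 4) ℂ) →ₐ[MvPolynomial (Fin 4) ℂ] _) :=
    transcendental_iff_injective.mp QQ_trans
  have key : ∀ p, (finSuccEquiv ℂ 4) ((aeval Wf) p)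
      = Polynomial.aeval QQ ((finSuccEquiv ℂ 4) p) := fun p => by
    have := AlgHom.congr_fun hcomp p
    simpa using this
  intro p q h
  apply (finSuccEquiv ℂ 4).injective
  apply hQ
  rw [← key, ← key, h]

noncomputable def vsub : Fin 6 → MvPolynomial (Fin 5) ℂ :=
  ![X 3, X 1, 1, X 4 - X 3 * X 0, X 2, X 0]

/-- The five polynomials `t₄ = u₂, t₆ = u₅, t₈ = u₁u₃, t₁₀ = u₁u₆ + u₃u₄, t₁₂ = u₄u₆`
are algebraically independent over ℂ in `ℂ[u₁,…,u₆]`. -/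
theorem t_algebraically_independent :
    AlgebraicIndependent ℂ ![t4, t6, t8, t10, t12] := by
  apply AlgebraicIndependent.of_comp (aeval vsub)
  have hperm : Function.Injective (![1, 2, 3, 4, 0] : Fin 5 → Fin 5) := by decide
  have h := W_indep.comp _ hperm
  convert h using 1
  funext i
  fin_cases i <;>
    · simp [t4, t6, t8, t10, t12, vsub, Wf, Matrix.cons_val_succ,
        show (5 : Fin 6) = Fin.succ 4 from rfl]
      try ring
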